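/- arXiv:2512.05055 — 5 statements merged into one kernel-verified Lean document; each statement's English description precedes it below -/
import Mathlib

section
/- Under hypothesis (h1), the mapping K₁ → ℝ that sends v to t_v (the unique maximum point of E(v) over [r, R]) is continuous. -/
/-!
The energy `(v, t) ↦ E(v)(t)` is jointly continuous on `K₁ × [0, ∞)`, being a parametric
primitive of a continuous integrand. Since `t_w` stays in the compact interval `[r₀, R₀]`, it
suffices that every cluster point `t₀` of `t_w` as `w → v` equals `t_v`; passing to the limit in
`E(w)(s) ≤ E(w)(t_w)` shows that `t₀` maximises `E(v)` on `[r, R]`, so `t₀ = t_v` by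
uniqueness.
-/

open Set MeasureTheory Filter Topology Function

/-- A unique-maximiser form of Berge's maximum theorem. -/
theorem continuousOn_of_unique_isMaxOn {α β γ : Type*} [TopologicalSpace α]
    [TopologicalSpace β] [LinearOrder γ] [TopologicalSpace γ] [OrderClosedTopology γ]
    {f : α → β → γ} {S : Set α} {A C : Set β} {m : α → β}
    (hf : ContinuousOn (uncurry f) (S ×ˢ A)) (hC : IsCompact C) (hCA : C ⊆ A)
    (hmC : ∀ v ∈ S, m v ∈ C) (hmax : ∀ v ∈ S, IsMaxOn (f v) A (m v))
    (huniq : ∀ v ∈ S, ∀ t ∈ A, IsMaxOn (f v) A t → t = m v) :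
    ContinuousOn m S := by
  intro v hv
  refine hC.tendsto_nhds_of_unique_mapClusterPt (eventually_nhdsWithin_of_forall hmC)
    fun t₀ ht₀ hcluster => huniq v hv t₀ (hCA ht₀) (isMaxOn_iff.2 fun s hs => ?_)
  obtain ⟨U, hUS, hUm⟩ := mapClusterPt_iff_ultrafilter.1 hcluster
  have hU_S : ∀ᶠ w in U, w ∈ S := hUS self_mem_nhdsWithin
  have hU_v : Tendsto id U (𝓝 v) := hUS.trans nhdsWithin_le_nhds
  have hmaxpt : Tendsto (fun w => (w, m w)) U (𝓝[S ×ˢ A] (v, t₀)) :=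
    tendsto_nhdsWithin_iff.2 ⟨hU_v.prodMk_nhds hUm,
      hU_S.mono fun w hw => ⟨hw, hCA (hmC w hw)⟩⟩
  have hfixed : Tendsto (fun w => (w, s)) U (𝓝[S ×ˢ A] (v, s)) :=
    tendsto_nhdsWithin_iff.2 ⟨hU_v.prodMk_nhds tendsto_const_nhds,
      hU_S.mono fun w hw => ⟨hw, hs⟩⟩
  exact le_of_tendsto_of_tendsto ((hf _ ⟨hv, hs⟩).tendsto.comp hfixed)
    ((hf _ ⟨hv, hCA ht₀⟩).tendsto.comp hmaxpt)
    (hU_S.mono fun w hw => isMaxOn_iff.1 (hmax w hw) s hs)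

theorem continuousOn_parametric_primitive_of_continuousOn {X E : Type*} [TopologicalSpace X]
    [NormedAddCommGroup E] [NormedSpace ℝ E] {g : X → ℝ → E} {S : Set X} {a : ℝ}
    (hg : ContinuousOn (uncurry g) (S ×ˢ Ici a)) :
    ContinuousOn (fun p : X × ℝ => ∫ s in a..p.2, g p.1 s) (S ×ˢ Ici a) := by
  -- Clamping the variable at `a` gives a jointly continuous integrand on `S × ℝ`.
  set G : S → ℝ → E := fun w s => g w (max s a)
  have hG : Continuous (uncurry G) :=
    hg.comp_continuous ((continuous_subtype_val.comp continuous_fst).prodMk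
      (continuous_snd.max continuous_const)) fun p => ⟨p.1.2, le_max_right p.2 a⟩
  rw [continuousOn_iff_continuous_domRestrict]
  have hpoint : Continuous fun p : ↥(S ×ˢ Ici a) => ((⟨p.1.1, p.2.1⟩ : S), p.1.2) :=
    ((continuous_fst.comp continuous_subtype_val).subtype_mk _).prodMk
      (continuous_snd.comp continuous_subtype_val)
  refine ((intervalIntegral.continuous_parametric_primitive_of_continuous (μ := volume)
    (a₀ := a) hG).comp hpoint).congr fun p => ?_
  refine intervalIntegral.integral_congr fun s hs => ?_
  rw [uIcc_of_le p.2.2] at hs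
  simp only [max_eq_left hs.1]

theorem continuousOn_radial_integrand {X : Type*} [NormedAddCommGroup X] [NormedSpace ℝ X]
    {K S : Set X} {T : X → X} {F : X → X → X → ℝ} (hSK : S ⊆ K)
    (hKcone : ∀ c : ℝ, 0 ≤ c → ∀ x ∈ K, c • x ∈ K) (hTmaps : ∀ x ∈ K, T x ∈ K)
    (hTcont : ContinuousOn T K)
    (hFcont : ContinuousOn (fun p : X × X × X => F p.1 p.2.1 p.2.2) (K ×ˢ K ×ˢ S)) :
    ContinuousOn (uncurry fun v (s : ℝ) => F (T (s • v)) (s • v) v) (S ×ˢ Ici 0) := by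
  have hray : ∀ p ∈ S ×ˢ Ici (0 : ℝ), p.2 • p.1 ∈ K := fun p hp =>
    hKcone _ hp.2 _ (hSK hp.1)
  have hsmul : ContinuousOn (fun p : X × ℝ => p.2 • p.1) (S ×ˢ Ici 0) :=
    (continuous_snd.smul continuous_fst).continuousOn
  exact hFcont.comp ((hTcont.comp hsmul hray).prodMk (hsmul.prodMk continuousOn_fst))
    fun p hp => ⟨hTmaps _ (hray p hp), hray p hp, hp.1⟩

theorem nehari_tv_continuous_general
    {X : Type*} [NormedAddCommGroup X] [NormedSpace ℝ X]
    (K : Set X)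
    (hKcone : ∀ c : ℝ, 0 ≤ c → ∀ x ∈ K, c • x ∈ K)
    (T : X → X) (hTmaps : ∀ x ∈ K, T x ∈ K)
    (hTcont : ContinuousOn T K)
    (F : X → X → X → ℝ)
    (hFcont : ContinuousOn (fun p : X × X × X => F p.1 p.2.1 p.2.2)
      (K ×ˢ K ×ˢ {v : X | v ∈ K ∧ ‖v‖ = 1}))
    (E : X → ℝ → ℝ)
    (hE : ∀ v : X, v ∈ K → ‖v‖ = 1 → ∀ t : ℝ,
      E v t = ∫ s in (0:ℝ)..t, F (T (s • v)) (s • v) v)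
    (r : ℝ) (R : EReal) (hr : 0 ≤ r)
    (r₀ R₀ : ℝ) (tv : X → ℝ)
    (hrr₀ : r ≤ r₀) (hR₀R : (R₀ : EReal) ≤ R)
    (h1mem : ∀ v : X, v ∈ K → ‖v‖ = 1 → r₀ < tv v ∧ tv v < R₀)
    (h1max : ∀ v : X, v ∈ K → ‖v‖ = 1 → ∀ t : ℝ, r ≤ t → (t : EReal) ≤ R →
      E v t ≤ E v (tv v))
    (h1uniq : ∀ v : X, v ∈ K → ‖v‖ = 1 → ∀ t : ℝ, r ≤ t → (t : EReal) ≤ R →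
      (∀ s : ℝ, r ≤ s → (s : EReal) ≤ R → E v s ≤ E v t) → t = tv v) :
    ContinuousOn tv {v : X | v ∈ K ∧ ‖v‖ = 1} := by
  set S := {v : X | v ∈ K ∧ ‖v‖ = 1}
  set A := {t : ℝ | r ≤ t ∧ (t : EReal) ≤ R}
  have hintegrand := continuousOn_radial_integrand (S := S) (fun _ hv => hv.1) hKcone hTmaps
    hTcont hFcont
  have hE_cont : ContinuousOn (uncurry E) (S ×ˢ A) :=
    ((continuousOn_parametric_primitive_of_continuousOn hintegrand).mono
        (prod_mono le_rfl fun t ht => hr.trans ht.1)).congr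
      fun p hp => hE p.1 hp.1.1 hp.1.2 p.2
  refine continuousOn_of_unique_isMaxOn hE_cont (isCompact_Icc (a := r₀) (b := R₀))
    (fun t ht => ⟨hrr₀.trans ht.1, (EReal.coe_le_coe_iff.2 ht.2).trans hR₀R⟩)
    (fun v hv => Ioo_subset_Icc_self (h1mem v hv.1 hv.2))
    (fun v hv => isMaxOn_iff.2 fun t ht => h1max v hv.1 hv.2 t ht.1 ht.2)
    fun v hv t ht htmax => h1uniq v hv.1 hv.2 t ht.1 ht.2 fun s hs hsR =>
      isMaxOn_iff.1 htmax s ⟨hs, hsR⟩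

/-- Under hypothesis (h1), the map `v ↦ t_v` (unique maximum point of the radial
energy `E(v)` over `[r, R]`) is continuous on `K₁ = {v ∈ K : ‖v‖ = 1}`. -/
theorem nehari_tv_continuous
    {X : Type*} [NormedAddCommGroup X] [NormedSpace ℝ X]
    (K : Set X) (hKclosed : IsClosed K) (hKconvex : Convex ℝ K)
    (hKcone : ∀ c : ℝ, 0 ≤ c → ∀ x ∈ K, c • x ∈ K)
    (hKnontriv : ∃ x ∈ K, x ≠ 0)
    (T : X → X) (hTmaps : ∀ x ∈ K, T x ∈ K)
    (hTcont : ContinuousOn T K)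
    (hTcompact : ∀ B : Set X, B ⊆ K → Bornology.IsBounded B →
      IsCompact (closure (T '' B)))
    (F : X → X → X → ℝ)
    (hFcont : ContinuousOn (fun p : X × X × X => F p.1 p.2.1 p.2.2)
      (K ×ˢ K ×ˢ {v : X | v ∈ K ∧ ‖v‖ = 1}))
    (E : X → ℝ → ℝ)
    (hE : ∀ v : X, v ∈ K → ‖v‖ = 1 → ∀ t : ℝ,
      E v t = ∫ s in (0:ℝ)..t, F (T (s • v)) (s • v) v)
    (r : ℝ) (R : EReal) (hr : 0 ≤ r) (hrR : (r : EReal) < R)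
    (r₀ R₀ : ℝ) (tv : X → ℝ)
    (hr₀pos : 0 < r₀) (hrr₀ : r ≤ r₀) (hr₀R₀ : r₀ < R₀) (hR₀R : (R₀ : EReal) ≤ R)
    (h1mem : ∀ v : X, v ∈ K → ‖v‖ = 1 → r₀ < tv v ∧ tv v < R₀)
    (h1max : ∀ v : X, v ∈ K → ‖v‖ = 1 → ∀ t : ℝ, r ≤ t → (t : EReal) ≤ R →
      E v t ≤ E v (tv v))
    (h1uniq : ∀ v : X, v ∈ K → ‖v‖ = 1 → ∀ t : ℝ, r ≤ t → (t : EReal) ≤ R →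
      (∀ s : ℝ, r ≤ s → (s : EReal) ≤ R → E v s ≤ E v t) → t = tv v) :
    ContinuousOn tv {v : X | v ∈ K ∧ ‖v‖ = 1} :=
  nehari_tv_continuous_general K hKcone T hTmaps hTcont F hFcont E hE r R hr r₀ R₀ tv hrr₀ hR₀R
    h1mem h1max h1uniq
end

section
/- Under hypothesis (h1): the set U is bounded (indeed U ⊆ {u ∈ K : ‖u‖ ≤ R₀}); U is open in K (its complement in K, U_c = {t v : v ∈ K₁, t ≥ t_v}, is closed); 0 ∈ U; the closure of U relative to K equals D = {t v : v ∈ K₁, 0 ≤ t ≤ t_v}; and the boundary of U relative to K equals U_b. -/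
/-!
Since the energy `(v, t) ↦ E v t` is jointly continuous on `K₁ × [0, ∞)` and `t_v` is its unique
maximizer, confined to the compact interval `[r₀, R₀]`, every cluster point of `t_w` as `w → v`
maximizes `E v`, so `v ↦ t_v` is continuous on `K₁`. In polar coordinates `u = ‖u‖ • (‖u‖⁻¹ • u)`
the sets `U`, `U_c`, `D` and `U_b` are the parts of `K` strictly below, on or above, on or below,
and on the graph of this continuous radius, which stays above `r₀ > 0`. Closedness of `U_c` and `D`
then comes from passing to the limit in both polar coordinates, and every point `t_v v` of the
graph is a limit of the segment `[0, t_v) v ⊆ U`.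
-/

open Set Filter Topology Function

theorem MapClusterPt.prodMk_of_tendsto {α X Y : Type*} [TopologicalSpace X] [TopologicalSpace Y]
    {l : Filter α} {f : α → X} {g : α → Y} {x : X} {y : Y}
    (hg : MapClusterPt y l g) (hf : Tendsto f l (𝓝 x)) :
    MapClusterPt (x, y) l fun a => (f a, g a) := by
  rw [((𝓝 x).basis_sets.prod_nhds (𝓝 y).basis_sets).mapClusterPt_iff_frequently]
  rintro ⟨s, t⟩ ⟨hs, ht⟩
  exact ((mapClusterPt_iff_frequently.1 hg t ht).and_eventually (hf hs)).mono
    fun a h => ⟨h.2, h.1⟩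

theorem continuous_of_isMaxOn_of_unique {Y Z β : Type*} [TopologicalSpace Y] [TopologicalSpace Z]
    [TopologicalSpace β] [Preorder β] [OrderClosedTopology β]
    {f : Y → Z → β} (hf : Continuous (uncurry f)) {S C : Set Z} (hC : IsCompact C)
    {g : Y → Z} (hgC : ∀ y, g y ∈ C) (hmax : ∀ y, IsMaxOn (f y) S (g y))
    (huniq : ∀ y, ∀ z ∈ C, IsMaxOn (f y) S z → z = g y) : Continuous g := by
  -- a cluster point `z` of `g` at `y` makes `(y, z)` a cluster point of the graph of `g`,
  -- which lies in the closed set `{p | f p.1 s ≤ f p.1 p.2}`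
  refine continuous_iff_continuousAt.2 fun y =>
    hC.tendsto_nhds_of_unique_mapClusterPt (.of_forall hgC) fun z hzC hz =>
      huniq y z hzC fun s hs => ?_
  have hclosed : IsClosed {p : Y × Z | f p.1 s ≤ f p.1 p.2} :=
    isClosed_le (hf.comp (continuous_fst.prodMk continuous_const)) hf
  exact hclosed.mem_of_mapClusterPt (hz.prodMk_of_tendsto tendsto_id)
    (.of_forall fun y' => show f y' s ≤ f y' (g y') from hmax y' hs)

section RadialEnergy

variable {X : Type*} [NormedAddCommGroup X] [NormedSpace ℝ X] {K : Set X} {T : X → X}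
  {F : X → X → X → ℝ}

/-- The integrand of the radial energy, with `s` clamped at `0` so that it is continuous on all of
`K₁ × ℝ` rather than on `K₁ × [0, ∞)`. -/
def clampedRadialIntegrand (T : X → X) (F : X → X → X → ℝ) (v : X) (s : ℝ) : ℝ :=
  F (T (max s 0 • v)) (max s 0 • v) v

theorem continuous_integral_clampedRadialIntegrand
    (hKcone : ∀ c : ℝ, 0 ≤ c → ∀ x ∈ K, c • x ∈ K)
    (hTmaps : ∀ x ∈ K, T x ∈ K) (hTcont : ContinuousOn T K)
    (hFcont : ContinuousOn (fun p : X × X × X => F p.1 p.2.1 p.2.2)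
      (K ×ˢ K ×ˢ {v : X | v ∈ K ∧ ‖v‖ = 1})) :
    Continuous fun p : {v : X | v ∈ K ∧ ‖v‖ = 1} × ℝ =>
      ∫ s in (0 : ℝ)..p.2, clampedRadialIntegrand T F p.1 s := by
  have hsmul : Continuous fun q : {v : X | v ∈ K ∧ ‖v‖ = 1} × ℝ => max q.2 0 • (q.1 : X) := by
    fun_prop
  have hmem : ∀ q : {v : X | v ∈ K ∧ ‖v‖ = 1} × ℝ, max q.2 0 • (q.1 : X) ∈ K := fun q =>
    hKcone _ (le_max_right _ _) _ q.1.2.1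
  refine intervalIntegral.continuous_parametric_primitive_of_continuous
    (f := fun (w : {v : X | v ∈ K ∧ ‖v‖ = 1}) => clampedRadialIntegrand T F w) ?_
  exact hFcont.comp_continuous ((hTcont.comp_continuous hsmul hmem).prodMk
    (hsmul.prodMk (continuous_subtype_val.comp continuous_fst)))
    fun q => ⟨hTmaps _ (hmem q), hmem q, q.1.2⟩

theorem integral_clampedRadialIntegrand {v : X} {t : ℝ} (ht : 0 ≤ t) :
    ∫ s in (0 : ℝ)..t, clampedRadialIntegrand T F v s =
      ∫ s in (0 : ℝ)..t, F (T (s • v)) (s • v) v :=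
  intervalIntegral.integral_congr fun s hs => by
    rw [uIcc_of_le ht] at hs
    simp only [clampedRadialIntegrand, max_eq_left hs.1]

theorem continuousOn_of_isMaxOn_radialEnergy (hKcone : ∀ c : ℝ, 0 ≤ c → ∀ x ∈ K, c • x ∈ K)
    (hTmaps : ∀ x ∈ K, T x ∈ K) (hTcont : ContinuousOn T K)
    (hFcont : ContinuousOn (fun p : X × X × X => F p.1 p.2.1 p.2.2)
      (K ×ˢ K ×ˢ {v : X | v ∈ K ∧ ‖v‖ = 1}))
    {E : X → ℝ → ℝ} (hE : ∀ v : X, v ∈ K → ‖v‖ = 1 → ∀ t : ℝ,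
      E v t = ∫ s in (0:ℝ)..t, F (T (s • v)) (s • v) v)
    {S : Set ℝ} (hS : S ⊆ Ici 0) {C : Set ℝ} (hC : IsCompact C) (hCS : C ⊆ S) {tv : X → ℝ}
    (htv : ∀ v ∈ K, ‖v‖ = 1 → tv v ∈ C) (hmax : ∀ v ∈ K, ‖v‖ = 1 → IsMaxOn (E v) S (tv v))
    (huniq : ∀ v ∈ K, ‖v‖ = 1 → ∀ t ∈ C, IsMaxOn (E v) S t → t = tv v) :
    ContinuousOn tv {v | v ∈ K ∧ ‖v‖ = 1} := by
  have hEq : ∀ v ∈ K, ‖v‖ = 1 → ∀ t ∈ S,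
      E v t = ∫ s in (0 : ℝ)..t, clampedRadialIntegrand T F v s := fun v hv hv1 t ht => by
    rw [hE v hv hv1, integral_clampedRadialIntegrand (hS ht)]
  have hmaxOn_iff : ∀ v ∈ K, ‖v‖ = 1 → ∀ t ∈ S, IsMaxOn (E v) S t ↔
      IsMaxOn (fun t => ∫ s in (0 : ℝ)..t, clampedRadialIntegrand T F v s) S t :=
    fun v hv hv1 t ht => by
      simp only [isMaxOn_iff]
      exact forall₂_congr fun s hs => by rw [hEq v hv hv1 s hs, hEq v hv hv1 t ht]
  rw [continuousOn_iff_continuous_domRestrict]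
  exact continuous_of_isMaxOn_of_unique
    (continuous_integral_clampedRadialIntegrand hKcone hTmaps hTcont hFcont)
    hC (fun w => htv w w.2.1 w.2.2)
    (fun w => (hmaxOn_iff w w.2.1 w.2.2 _ (hCS (htv w w.2.1 w.2.2))).1 (hmax w w.2.1 w.2.2))
    fun w t ht h => huniq w w.2.1 w.2.2 t ht ((hmaxOn_iff w w.2.1 w.2.2 t (hCS ht)).2 h)

end RadialEnergy

section RadialRegion

variable {X : Type*} [NormedAddCommGroup X] [NormedSpace ℝ X] {K : Set X} {ρ : X → ℝ}

/- With `ρ = t_v`, the sets `U`, `D`, `U_c`, `U_b` of the paper are `radialLT`, `radialLE`,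
`radialGE`, `radialGraph`. -/
def radialLT (K : Set X) (ρ : X → ℝ) : Set X :=
  {u | ∃ v, (v ∈ K ∧ ‖v‖ = 1) ∧ ∃ t : ℝ, 0 ≤ t ∧ t < ρ v ∧ u = t • v}

def radialLE (K : Set X) (ρ : X → ℝ) : Set X :=
  {u | ∃ v, (v ∈ K ∧ ‖v‖ = 1) ∧ ∃ t : ℝ, 0 ≤ t ∧ t ≤ ρ v ∧ u = t • v}

def radialGE (K : Set X) (ρ : X → ℝ) : Set X :=
  {u | ∃ v, (v ∈ K ∧ ‖v‖ = 1) ∧ ∃ t : ℝ, ρ v ≤ t ∧ u = t • v}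

def radialGraph (K : Set X) (ρ : X → ℝ) : Set X :=
  {u | ∃ v, (v ∈ K ∧ ‖v‖ = 1) ∧ u = ρ v • v}

theorem norm_smul_of_norm_eq_one {t : ℝ} {v : X} (ht : 0 ≤ t) (hv : ‖v‖ = 1) : ‖t • v‖ = t := by
  rw [norm_smul_of_nonneg ht, hv, mul_one]

theorem eq_and_eq_of_smul_eq_smul {t t' : ℝ} {v v' : X} (ht : 0 < t) (ht' : 0 ≤ t')
    (hv : ‖v‖ = 1) (hv' : ‖v'‖ = 1) (h : t • v = t' • v') : t = t' ∧ v = v' := by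
  have htt' : t = t' := by
    simpa only [norm_smul_of_norm_eq_one ht.le hv, norm_smul_of_norm_eq_one ht' hv'] using
      congrArg norm h
  subst htt'
  exact ⟨rfl, smul_right_injective X ht.ne' h⟩

theorem inv_norm_smul_mem (hKcone : ∀ c : ℝ, 0 ≤ c → ∀ x ∈ K, c • x ∈ K) {u : X} (hu : u ∈ K)
    (hu0 : u ≠ 0) : ‖u‖⁻¹ • u ∈ K ∧ ‖‖u‖⁻¹ • u‖ = 1 :=
  ⟨hKcone _ (inv_nonneg.2 (norm_nonneg u)) u hu, norm_smul_inv_norm hu0⟩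

theorem tendsto_polar_of_tendsto_smul {ι : Type*} {l : Filter ι} {t : ι → ℝ} {v : ι → X} {u : X}
    (hu : u ≠ 0) (ht : ∀ i, 0 ≤ t i) (hv : ∀ i, ‖v i‖ = 1)
    (h : Tendsto (fun i => t i • v i) l (𝓝 u)) :
    Tendsto t l (𝓝 ‖u‖) ∧ Tendsto v l (𝓝 (‖u‖⁻¹ • u)) := by
  have htu : Tendsto t l (𝓝 ‖u‖) := by
    simpa only [norm_smul_of_norm_eq_one (ht _) (hv _)] using h.norm
  refine ⟨htu, ((htu.inv₀ (norm_ne_zero_iff.2 hu)).smul h).congr' ?_⟩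
  filter_upwards [htu.eventually_ne (norm_ne_zero_iff.2 hu)] with i hi
  rw [inv_smul_smul₀ hi]

theorem tendsto_radius_of_tendsto_smul (hK : IsClosed K)
    (hρ : ContinuousOn ρ {v | v ∈ K ∧ ‖v‖ = 1}) {ι : Type*} {l : Filter ι} [l.NeBot]
    {t : ι → ℝ} {v : ι → X} {u : X} (hu : u ≠ 0) (ht : ∀ i, 0 ≤ t i)
    (hv : ∀ i, v i ∈ K ∧ ‖v i‖ = 1) (h : Tendsto (fun i => t i • v i) l (𝓝 u)) :
    (‖u‖⁻¹ • u ∈ K ∧ ‖‖u‖⁻¹ • u‖ = 1) ∧ Tendsto t l (𝓝 ‖u‖) ∧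
      Tendsto (fun i => ρ (v i)) l (𝓝 (ρ (‖u‖⁻¹ • u))) := by
  obtain ⟨htu, hvu⟩ := tendsto_polar_of_tendsto_smul hu ht (fun i => (hv i).2) h
  have hw : ‖u‖⁻¹ • u ∈ K ∧ ‖‖u‖⁻¹ • u‖ = 1 :=
    ⟨hK.mem_of_tendsto hvu (.of_forall fun i => (hv i).1), norm_smul_inv_norm hu⟩
  exact ⟨hw, htu, (hρ _ hw).tendsto.comp (tendsto_nhdsWithin_iff.2 ⟨hvu, .of_forall hv⟩)⟩

theorem isClosed_radialGE (hK : IsClosed K) (hρ : ContinuousOn ρ {v | v ∈ K ∧ ‖v‖ = 1})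
    {c : ℝ} (hc : 0 < c) (hρc : ∀ v ∈ K, ‖v‖ = 1 → c ≤ ρ v) : IsClosed (radialGE K ρ) := by
  refine IsSeqClosed.isClosed fun x u hx hlim => ?_
  choose v hv t ht hxt using hx
  obtain rfl : x = fun n => t n • v n := funext hxt
  have htc : ∀ n, c ≤ t n := fun n => (hρc _ (hv n).1 (hv n).2).trans (ht n)
  have ht0 : ∀ n, 0 ≤ t n := fun n => hc.le.trans (htc n)
  have hu : u ≠ 0 := by
    refine norm_ne_zero_iff.1 (hc.trans_le (ge_of_tendsto' hlim.norm fun n => ?_)).ne'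
    rw [norm_smul_of_norm_eq_one (ht0 n) (hv n).2]
    exact htc n
  obtain ⟨hw, htu, hρu⟩ := tendsto_radius_of_tendsto_smul hK hρ hu ht0 hv hlim
  exact ⟨_, hw, ‖u‖, le_of_tendsto_of_tendsto' hρu htu ht,
    (smul_inv_smul₀ (norm_ne_zero_iff.2 hu) u).symm⟩

theorem isClosed_radialLE (hK : IsClosed K) (hρ : ContinuousOn ρ {v | v ∈ K ∧ ‖v‖ = 1}) :
    IsClosed (radialLE K ρ) := by
  refine IsSeqClosed.isClosed fun x u hx hlim => ?_
  choose v hv t ht0 ht hxt using hx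
  obtain rfl : x = fun n => t n • v n := funext hxt
  rcases eq_or_ne u 0 with rfl | hu
  · exact ⟨v 0, hv 0, 0, le_rfl, (ht0 0).trans (ht 0), (zero_smul ℝ _).symm⟩
  obtain ⟨hw, htu, hρu⟩ := tendsto_radius_of_tendsto_smul hK hρ hu ht0 hv hlim
  exact ⟨_, hw, ‖u‖, norm_nonneg u, le_of_tendsto_of_tendsto' htu hρu ht,
    (smul_inv_smul₀ (norm_ne_zero_iff.2 hu) u).symm⟩

theorem zero_mem_radialLT (hρ : ∀ v ∈ K, ‖v‖ = 1 → 0 < ρ v) (hK : ∃ v ∈ K, ‖v‖ = 1) :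
    (0 : X) ∈ radialLT K ρ :=
  let ⟨v, hvK, hv⟩ := hK
  ⟨v, ⟨hvK, hv⟩, 0, le_rfl, hρ v hvK hv, (zero_smul ℝ v).symm⟩

theorem radialLT_subset (hKcone : ∀ c : ℝ, 0 ≤ c → ∀ x ∈ K, c • x ∈ K) {R : ℝ}
    (hρR : ∀ v ∈ K, ‖v‖ = 1 → ρ v ≤ R) : radialLT K ρ ⊆ {u | u ∈ K ∧ ‖u‖ ≤ R} := by
  rintro _ ⟨v, hv, t, ht0, ht, rfl⟩
  exact ⟨hKcone t ht0 v hv.1,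
    (norm_smul_of_norm_eq_one ht0 hv.2).trans_le (ht.le.trans (hρR v hv.1 hv.2))⟩

theorem radialLT_eq_compl_radialGE_inter (hKcone : ∀ c : ℝ, 0 ≤ c → ∀ x ∈ K, c • x ∈ K)
    (hρ : ∀ v ∈ K, ‖v‖ = 1 → 0 < ρ v) (hK : ∃ v ∈ K, ‖v‖ = 1) :
    radialLT K ρ = (radialGE K ρ)ᶜ ∩ K := by
  ext u
  constructor
  · rintro ⟨v, hv, t, ht0, ht, rfl⟩
    refine ⟨?_, hKcone t ht0 v hv.1⟩
    rintro ⟨v', hv', t', ht', h⟩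
    have ht'0 : 0 < t' := (hρ v' hv'.1 hv'.2).trans_le ht'
    obtain ⟨rfl, rfl⟩ := eq_and_eq_of_smul_eq_smul ht'0 ht0 hv'.2 hv.2 h.symm
    exact ht.not_ge ht'
  · rintro ⟨hGE, huK⟩
    rcases eq_or_ne u 0 with rfl | hu
    · exact zero_mem_radialLT hρ hK
    have hu' : u = ‖u‖ • (‖u‖⁻¹ • u) := (smul_inv_smul₀ (norm_ne_zero_iff.2 hu) u).symm
    have hw := inv_norm_smul_mem hKcone huK hu
    exact ⟨_, hw, ‖u‖, norm_nonneg u, not_le.1 fun h => hGE ⟨_, hw, ‖u‖, h, hu'⟩, hu'⟩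

theorem closure_radialLT (hK : IsClosed K) (hρc : ContinuousOn ρ {v | v ∈ K ∧ ‖v‖ = 1})
    (hρ : ∀ v ∈ K, ‖v‖ = 1 → 0 < ρ v) : closure (radialLT K ρ) = radialLE K ρ := by
  refine (closure_minimal ?_ (isClosed_radialLE hK hρc)).antisymm ?_
  · rintro _ ⟨v, hv, t, ht0, ht, rfl⟩
    exact ⟨v, hv, t, ht0, ht.le, rfl⟩
  · rintro _ ⟨v, hv, t, ht0, ht, rfl⟩
    have hsegment : (· • v) '' Ico 0 (ρ v) ⊆ radialLT K ρ := by
      rintro _ ⟨s, hs, rfl⟩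
      exact ⟨v, hv, s, hs.1, hs.2, rfl⟩
    have ht : t ∈ closure (Ico 0 (ρ v)) := by
      rw [closure_Ico (hρ v hv.1 hv.2).ne]
      exact ⟨ht0, ht⟩
    exact closure_mono hsegment
      (image_closure_subset_closure_image (continuous_id.smul continuous_const) ⟨t, ht, rfl⟩)

theorem radialLE_diff_radialLT (hρ : ∀ v ∈ K, ‖v‖ = 1 → 0 < ρ v) :
    radialLE K ρ \ radialLT K ρ = radialGraph K ρ := by
  ext u
  constructor
  · rintro ⟨⟨v, hv, t, ht0, ht, rfl⟩, hLT⟩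
    obtain rfl : t = ρ v := ht.eq_of_not_lt fun h => hLT ⟨v, hv, t, ht0, h, rfl⟩
    exact ⟨v, hv, rfl⟩
  · rintro ⟨v, hv, rfl⟩
    refine ⟨⟨v, hv, ρ v, (hρ v hv.1 hv.2).le, le_rfl, rfl⟩, ?_⟩
    rintro ⟨v', hv', t, ht0, ht, h⟩
    obtain ⟨rfl, rfl⟩ := eq_and_eq_of_smul_eq_smul (hρ v hv.1 hv.2) ht0 hv.2 hv'.2 h
    exact ht.false

end RadialRegion

theorem nehari_U_open_bounded_boundary_general
    {X : Type*} [NormedAddCommGroup X] [NormedSpace ℝ X]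
    (K : Set X) (hKclosed : IsClosed K)
    (hKcone : ∀ c : ℝ, 0 ≤ c → ∀ x ∈ K, c • x ∈ K)
    (hKnontriv : ∃ x ∈ K, x ≠ 0)
    (T : X → X) (hTmaps : ∀ x ∈ K, T x ∈ K)
    (hTcont : ContinuousOn T K)
    (F : X → X → X → ℝ)
    (hFcont : ContinuousOn (fun p : X × X × X => F p.1 p.2.1 p.2.2)
      (K ×ˢ K ×ˢ {v : X | v ∈ K ∧ ‖v‖ = 1}))
    (E : X → ℝ → ℝ)
    (hE : ∀ v : X, v ∈ K → ‖v‖ = 1 → ∀ t : ℝ,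
      E v t = ∫ s in (0:ℝ)..t, F (T (s • v)) (s • v) v)
    (r : ℝ) (R : EReal) (hr : 0 ≤ r)
    (r₀ R₀ : ℝ) (tv : X → ℝ)
    (hr₀pos : 0 < r₀) (hrr₀ : r ≤ r₀) (hR₀R : (R₀ : EReal) ≤ R)
    (h1mem : ∀ v : X, v ∈ K → ‖v‖ = 1 → r₀ < tv v ∧ tv v < R₀)
    (h1max : ∀ v : X, v ∈ K → ‖v‖ = 1 → ∀ t : ℝ, r ≤ t → (t : EReal) ≤ R →
      E v t ≤ E v (tv v))
    (h1uniq : ∀ v : X, v ∈ K → ‖v‖ = 1 → ∀ t : ℝ, r ≤ t → (t : EReal) ≤ R →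
      (∀ s : ℝ, r ≤ s → (s : EReal) ≤ R → E v s ≤ E v t) → t = tv v)
    :
    ∀ U Uc D Ub : Set X,
    U = {u : X | ∃ v, (v ∈ K ∧ ‖v‖ = 1) ∧ ∃ t : ℝ, 0 ≤ t ∧ t < tv v ∧ u = t • v} →
    Uc = {u : X | ∃ v, (v ∈ K ∧ ‖v‖ = 1) ∧ ∃ t : ℝ, tv v ≤ t ∧ u = t • v} →
    D = {u : X | ∃ v, (v ∈ K ∧ ‖v‖ = 1) ∧ ∃ t : ℝ, 0 ≤ t ∧ t ≤ tv v ∧ u = t • v} →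
    Ub = {u : X | ∃ v, (v ∈ K ∧ ‖v‖ = 1) ∧ u = tv v • v} →
    U ⊆ {u : X | u ∈ K ∧ ‖u‖ ≤ R₀} ∧
    (0 : X) ∈ U ∧
    IsClosed Uc ∧
    (∃ V : Set X, IsOpen V ∧ U = V ∩ K) ∧
    closure U = D ∧
    closure U \ U = Ub := by
  intro U Uc D Ub hU hUc hD hUb
  obtain rfl : U = radialLT K tv := hU
  obtain rfl : Uc = radialGE K tv := hUc
  obtain rfl : D = radialLE K tv := hD
  obtain rfl : Ub = radialGraph K tv := hUb
  have hpos : ∀ v ∈ K, ‖v‖ = 1 → 0 < tv v := fun v hv hv1 => hr₀pos.trans (h1mem v hv hv1).1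
  have hK₁ : ∃ v ∈ K, ‖v‖ = 1 :=
    let ⟨x, hx, hx0⟩ := hKnontriv
    ⟨_, inv_norm_smul_mem hKcone hx hx0⟩
  have hIcc : Icc r₀ R₀ ⊆ {t : ℝ | r ≤ t ∧ (t : EReal) ≤ R} := fun t ht =>
    ⟨hrr₀.trans ht.1, (EReal.coe_le_coe_iff.2 ht.2).trans hR₀R⟩
  have hcont : ContinuousOn tv {v | v ∈ K ∧ ‖v‖ = 1} :=
    continuousOn_of_isMaxOn_radialEnergy hKcone hTmaps hTcont hFcont hE
      (fun t ht => hr.trans ht.1) isCompact_Icc hIcc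
      (fun v hv hv1 => Ioo_subset_Icc_self (h1mem v hv hv1))
      (fun v hv hv1 t ht => h1max v hv hv1 t ht.1 ht.2)
      fun v hv hv1 t ht hmax =>
        h1uniq v hv hv1 t (hIcc ht).1 (hIcc ht).2 fun s hs hsR => hmax ⟨hs, hsR⟩
  have hUc : IsClosed (radialGE K tv) :=
    isClosed_radialGE hKclosed hcont hr₀pos fun v hv hv1 => (h1mem v hv hv1).1.le
  refine ⟨radialLT_subset hKcone fun v hv hv1 => (h1mem v hv hv1).2.le,
    zero_mem_radialLT hpos hK₁, hUc,
    ⟨_, hUc.isOpen_compl, radialLT_eq_compl_radialGE_inter hKcone hpos hK₁⟩,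
    closure_radialLT hKclosed hcont hpos, ?_⟩
  rw [closure_radialLT hKclosed hcont hpos]
  exact radialLE_diff_radialLT hpos

/-- Under hypothesis (h1): `U` is bounded (indeed `U ⊆ {u ∈ K : ‖u‖ ≤ R₀}`),
`0 ∈ U`, the complement `U_c` of `U` in `K` is closed (so `U` is open in `K`),
the closure of `U` relative to `K` equals `D = {t v : v ∈ K₁, 0 ≤ t ≤ t_v}`,
and the boundary of `U` relative to `K` equals `U_b`. -/
theorem nehari_U_open_bounded_boundary
    {X : Type*} [NormedAddCommGroup X] [NormedSpace ℝ X]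
    (K : Set X) (hKclosed : IsClosed K) (hKconvex : Convex ℝ K)
    (hKcone : ∀ c : ℝ, 0 ≤ c → ∀ x ∈ K, c • x ∈ K)
    (hKnontriv : ∃ x ∈ K, x ≠ 0)
    (T : X → X) (hTmaps : ∀ x ∈ K, T x ∈ K)
    (hTcont : ContinuousOn T K)
    (hTcompact : ∀ B : Set X, B ⊆ K → Bornology.IsBounded B →
      IsCompact (closure (T '' B)))
    (F : X → X → X → ℝ)
    (hFcont : ContinuousOn (fun p : X × X × X => F p.1 p.2.1 p.2.2)
      (K ×ˢ K ×ˢ {v : X | v ∈ K ∧ ‖v‖ = 1}))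
    (E : X → ℝ → ℝ)
    (hE : ∀ v : X, v ∈ K → ‖v‖ = 1 → ∀ t : ℝ,
      E v t = ∫ s in (0:ℝ)..t, F (T (s • v)) (s • v) v)
    (r : ℝ) (R : EReal) (hr : 0 ≤ r) (hrR : (r : EReal) < R)
    (r₀ R₀ : ℝ) (tv : X → ℝ)
    (hr₀pos : 0 < r₀) (hrr₀ : r ≤ r₀) (hr₀R₀ : r₀ < R₀) (hR₀R : (R₀ : EReal) ≤ R)
    (h1mem : ∀ v : X, v ∈ K → ‖v‖ = 1 → r₀ < tv v ∧ tv v < R₀)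
    (h1max : ∀ v : X, v ∈ K → ‖v‖ = 1 → ∀ t : ℝ, r ≤ t → (t : EReal) ≤ R →
      E v t ≤ E v (tv v))
    (h1uniq : ∀ v : X, v ∈ K → ‖v‖ = 1 → ∀ t : ℝ, r ≤ t → (t : EReal) ≤ R →
      (∀ s : ℝ, r ≤ s → (s : EReal) ≤ R → E v s ≤ E v t) → t = tv v)
    :
    ∀ U Uc D Ub : Set X,
    U = {u : X | ∃ v, (v ∈ K ∧ ‖v‖ = 1) ∧ ∃ t : ℝ, 0 ≤ t ∧ t < tv v ∧ u = t • v} →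
    Uc = {u : X | ∃ v, (v ∈ K ∧ ‖v‖ = 1) ∧ ∃ t : ℝ, tv v ≤ t ∧ u = t • v} →
    D = {u : X | ∃ v, (v ∈ K ∧ ‖v‖ = 1) ∧ ∃ t : ℝ, 0 ≤ t ∧ t ≤ tv v ∧ u = t • v} →
    Ub = {u : X | ∃ v, (v ∈ K ∧ ‖v‖ = 1) ∧ u = tv v • v} →
    U ⊆ {u : X | u ∈ K ∧ ‖u‖ ≤ R₀} ∧
    (0 : X) ∈ U ∧
    IsClosed Uc ∧
    (∃ V : Set X, IsOpen V ∧ U = V ∩ K) ∧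
    closure U = D ∧
    closure U \ U = Ub :=
  nehari_U_open_bounded_boundary_general K hKclosed hKcone hKnontriv T hTmaps hTcont F hFcont E hE r
    R hr r₀ R₀ tv hr₀pos hrr₀ hR₀R h1mem h1max h1uniq
end

section
/- If u ∈ X satisfies ⟨E′(u), u⟩ = 0, then the element w = J⁻¹(Ju − E′(u)) = T(u) satisfies ‖w‖ ≥ ‖u‖. -/
open Set

theorem norm_le_of_apply_self_le_apply {X : Type*} [NormedAddCommGroup X] [NormedSpace ℝ X]
    {θ : ℝ → ℝ} (hθ : StrictMonoOn θ (Ici 0)) {J : X → StrongDual ℝ X}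
    (hJpair : ∀ x, J x x = θ ‖x‖ * ‖x‖) (hJnorm : ∀ x, ‖J x‖ = θ ‖x‖) {u w : X}
    (h : J u u ≤ J w u) : ‖u‖ ≤ ‖w‖ := by
  rcases eq_or_ne u 0 with rfl | hu
  · simp
  have hθuw : θ ‖u‖ * ‖u‖ ≤ θ ‖w‖ * ‖u‖ :=
    calc θ ‖u‖ * ‖u‖ = J u u := (hJpair u).symm
      _ ≤ J w u := h
      _ ≤ ‖J w‖ * ‖u‖ := (le_abs_self _).trans ((J w).le_opNorm u)
      _ = θ ‖w‖ * ‖u‖ := by rw [hJnorm]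
  exact (hθ.le_iff_le (norm_nonneg u) (norm_nonneg w)).mp
    (le_of_mul_le_mul_right hθuw (norm_pos_iff.mpr hu))

theorem norm_T_ge_of_nehari_general
    {X : Type*} [NormedAddCommGroup X] [NormedSpace ℝ X]
    (θ : ℝ → ℝ)
    (hθmono : StrictMonoOn θ (Set.Ici 0))
    (J : X → StrongDual ℝ X)
    (hJpair : ∀ x, J x x = θ ‖x‖ * ‖x‖)
    (hJnorm : ∀ x, ‖J x‖ = θ ‖x‖)
    (Jinv : StrongDual ℝ X → X)
    (hJinvR : Function.RightInverse Jinv J)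
    (E' : X → StrongDual ℝ X)
    (T : X → X) (hT : ∀ u, T u = Jinv (J u - E' u)) :
    ∀ u : X, E' u u = 0 → ‖u‖ ≤ ‖T u‖ := by
  intro u hu
  have hJTu : J (T u) = J u - E' u := by rw [hT]; exact hJinvR _
  refine norm_le_of_apply_self_le_apply hθmono hJpair hJnorm ?_
  rw [hJTu, sub_apply, hu, sub_zero]

/-- If `⟨E′(u), u⟩ = 0`, then `w = T(u) = J⁻¹(Ju − E′(u))` satisfies `‖w‖ ≥ ‖u‖`. -/
theorem norm_T_ge_of_nehari
    {X : Type*} [NormedAddCommGroup X] [NormedSpace ℝ X]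
    (θ : ℝ → ℝ) (hθcont : ContinuousOn θ (Set.Ici 0))
    (hθmono : StrictMonoOn θ (Set.Ici 0)) (hθ0 : θ 0 = 0)
    (hθtop : Filter.Tendsto θ Filter.atTop Filter.atTop) (hθ1 : θ 1 = 1)
    (J : X → StrongDual ℝ X)
    (hJpair : ∀ x, J x x = θ ‖x‖ * ‖x‖)
    (hJnorm : ∀ x, ‖J x‖ = θ ‖x‖)
    (hJhom : ∀ c : ℝ, 0 < c → ∀ x, J (c • x) = θ c • J x)
    (hJbij : Function.Bijective J)
    (Jinv : StrongDual ℝ X → X)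
    (hJinvL : Function.LeftInverse Jinv J)
    (hJinvR : Function.RightInverse Jinv J)
    (hJinvcont : Continuous Jinv)
    (E : X → ℝ) (E' : X → StrongDual ℝ X)
    (hE : ∀ x, HasFDerivAt E (E' x) x) (hE'cont : Continuous E')
    (hE0 : E 0 = 0)
    (T : X → X) (hT : ∀ u, T u = Jinv (J u - E' u)) :
    ∀ u : X, E' u u = 0 → ‖u‖ ≤ ‖T u‖ :=
  norm_T_ge_of_nehari_general θ hθmono J hJpair hJnorm Jinv hJinvR E' T hT
end

section
/- Let p > 1 and let h : [0, 1/2] → ℝ be integrable, nonnegative, and nondecreasing. Define μ(t) = ∫_t^{1/2} h(s) ds, u(t) = ∫₀ᵗ μ(s)^{1/(p−1)} ds, and φ(t) = ∫₀ᵗ (1 − 2s)^{1/(p−1)} ds for t ∈ [0, 1/2]. Then u is concave on [0, 1/2], and for every t ∈ [0, 1/2], u(t) ≥ φ(t) · (2 ∫₀^{1/2} μ(s)^{p/(p−1)} ds)^{1/p}. -/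
open Set MeasureTheory

/-!
Since `h` is nondecreasing, `μ = ∫_0^{1/2} h - ∫_0^t h` is concave; it vanishes at `1/2`, so it
lies above its chord: `μ(s) ≥ (1 - 2s) μ(0)`. Raising this to the power `1/(p-1)` and integrating
gives `u(t) ≥ φ(t) μ(0)^{1/(p-1)}`. Since `μ` is nonincreasing,
`2 ∫_0^{1/2} μ^{p/(p-1)} ≤ μ(0)^{p/(p-1)}`, so the constant is at most `μ(0)^{1/(p-1)}`.
Concavity of `u` holds because its integrand `μ^{1/(p-1)}` is nonincreasing.
-/

open intervalIntegral

section IntervalIntegral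

variable {f : ℝ → ℝ} {a b : ℝ}

theorem MonotoneOn.mul_le_intervalIntegral (hf : MonotoneOn f (Icc a b)) (hab : a ≤ b) :
    (b - a) * f a ≤ ∫ x in a..b, f x := by
  calc (b - a) * f a = ∫ _ in a..b, f a := by simp
    _ ≤ ∫ x in a..b, f x :=
      integral_mono_on hab intervalIntegrable_const
        (MonotoneOn.intervalIntegrable (by rwa [uIcc_of_le hab]))
        fun _ hx => hf (left_mem_Icc.2 hab) hx hx.1

theorem MonotoneOn.intervalIntegral_le_mul (hf : MonotoneOn f (Icc a b)) (hab : a ≤ b) :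
    ∫ x in a..b, f x ≤ (b - a) * f b := by
  calc ∫ x in a..b, f x ≤ ∫ _ in a..b, f b :=
      integral_mono_on hab (MonotoneOn.intervalIntegrable (by rwa [uIcc_of_le hab]))
        intervalIntegrable_const fun _ hx => hf hx (right_mem_Icc.2 hab) hx.2
    _ = (b - a) * f b := by simp

theorem AntitoneOn.intervalIntegral_le_mul (hf : AntitoneOn f (Icc a b)) (hab : a ≤ b) :
    ∫ x in a..b, f x ≤ (b - a) * f a := by
  calc ∫ x in a..b, f x ≤ ∫ _ in a..b, f a :=
      integral_mono_on hab (AntitoneOn.intervalIntegrable (by rwa [uIcc_of_le hab]))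
        intervalIntegrable_const fun _ hx => hf (left_mem_Icc.2 hab) hx hx.1
    _ = (b - a) * f a := by simp

theorem MonotoneOn.convexOn_intervalIntegral (hf : MonotoneOn f (Icc a b)) :
    ConvexOn ℝ (Icc a b) fun x => ∫ t in a..x, f t := by
  have hint : ∀ x ∈ Icc a b, ∀ y ∈ Icc a b, IntervalIntegrable f volume x y :=
    fun x hx y hy => (hf.mono (uIcc_subset_Icc hx hy)).intervalIntegrable
  refine convexOn_of_slope_mono_adjacent (convex_Icc a b) fun {x y z} hx hz hxy hyz => ?_
  have hy : y ∈ Icc a b := ⟨hx.1.trans hxy.le, hyz.le.trans hz.2⟩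
  have ha : a ∈ Icc a b := left_mem_Icc.2 (hx.1.trans hx.2)
  rw [integral_interval_sub_left (hint a ha y hy) (hint a ha x hx),
    integral_interval_sub_left (hint a ha z hz) (hint a ha y hy)]
  calc (∫ t in x..y, f t) / (y - x) ≤ f y := by
        rw [div_le_iff₀ (sub_pos.2 hxy), mul_comm]
        exact (hf.mono (Icc_subset_Icc hx.1 hy.2)).intervalIntegral_le_mul hxy.le
    _ ≤ (∫ t in y..z, f t) / (z - y) := by
        rw [le_div_iff₀ (sub_pos.2 hyz), mul_comm]
        exact (hf.mono (Icc_subset_Icc hy.1 hz.2)).mul_le_intervalIntegral hyz.le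

theorem AntitoneOn.concaveOn_intervalIntegral (hf : AntitoneOn f (Icc a b)) :
    ConcaveOn ℝ (Icc a b) fun x => ∫ t in a..x, f t := by
  have hconv : ConvexOn ℝ (Icc a b) fun x => ∫ t in a..x, -f t :=
    MonotoneOn.convexOn_intervalIntegral fun _ hx _ hy hxy => neg_le_neg (hf hx hy hxy)
  simpa only [intervalIntegral.integral_neg, Pi.neg_def, neg_neg] using hconv.neg

theorem MonotoneOn.concaveOn_intervalIntegral_right (hf : MonotoneOn f (Icc a b)) :
    ConcaveOn ℝ (Icc a b) fun x => ∫ t in x..b, f t := by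
  have hint : ∀ x ∈ Icc a b, ∀ y ∈ Icc a b, IntervalIntegrable f volume x y :=
    fun x hx y hy => (hf.mono (uIcc_subset_Icc hx hy)).intervalIntegrable
  refine ((concaveOn_const _ (convex_Icc a b)).sub hf.convexOn_intervalIntegral).congr
    fun x hx => integral_interval_sub_left (hint a ?_ b ?_) (hint a ?_ x hx)
  all_goals simp [hx.1.trans hx.2]

theorem antitoneOn_intervalIntegral_right_of_nonneg (hf : IntegrableOn f (Icc a b))
    (hf₀ : ∀ x ∈ Icc a b, 0 ≤ f x) : AntitoneOn (fun x => ∫ t in x..b, f t) (Icc a b) := by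
  have hint : ∀ x ∈ Icc a b, ∀ y ∈ Icc a b, IntervalIntegrable f volume x y :=
    fun x hx y hy => (hf.mono_set (uIcc_subset_Icc hx hy)).intervalIntegrable
  intro x hx y hy hxy
  have hb : b ∈ Icc a b := right_mem_Icc.2 (hx.1.trans hx.2)
  dsimp only
  rw [← integral_add_adjacent_intervals (hint x hx y hy) (hint y hy b hb)]
  exact le_add_of_nonneg_left
    (integral_nonneg hxy fun t ht => hf₀ t ⟨hx.1.trans ht.1, ht.2.trans hy.2⟩)

end IntervalIntegral

theorem AntitoneOn.rpow_const {g : ℝ → ℝ} {s : Set ℝ} {r : ℝ} (hg : AntitoneOn g s)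
    (hg₀ : ∀ x ∈ s, 0 ≤ g x) (hr : 0 ≤ r) : AntitoneOn (fun x => g x ^ r) s :=
  fun _ hx _ hy hxy => Real.rpow_le_rpow (hg₀ _ hy) (hg hx hy hxy) hr

theorem ConcaveOn.one_sub_div_mul_le {f : ℝ → ℝ} {b s : ℝ} (hf : ConcaveOn ℝ (Icc 0 b) f)
    (hb : 0 < b) (hfb : 0 ≤ f b) (hs : s ∈ Icc 0 b) : (1 - s / b) * f 0 ≤ f s := by
  have hsb : 0 ≤ s / b := div_nonneg hs.1 hb.le
  have hchord := hf.2 (left_mem_Icc.2 hb.le) (right_mem_Icc.2 hb.le)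
    (sub_nonneg.2 ((div_le_one hb).2 hs.2)) hsb (sub_add_cancel 1 (s / b))
  simp only [smul_eq_mul, mul_zero, zero_add, div_mul_cancel₀ s hb.ne'] at hchord
  nlinarith [mul_nonneg hsb hfb]

theorem AntitoneOn.nonneg_of_nonneg_right {g : ℝ → ℝ} {a b : ℝ} (hg : AntitoneOn g (Icc a b))
    (hb : 0 ≤ g b) : ∀ x ∈ Icc a b, 0 ≤ g x :=
  fun _ hx => hb.trans (hg hx (right_mem_Icc.2 (hx.1.trans hx.2)) hx.2)

theorem ConcaveOn.intervalIntegral_one_sub_two_mul_rpow_mul_le {g : ℝ → ℝ} {r t : ℝ}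
    (hg : ConcaveOn ℝ (Icc 0 (1 / 2)) g) (hanti : AntitoneOn g (Icc 0 (1 / 2)))
    (hg₀ : 0 ≤ g (1 / 2)) (hr : 0 ≤ r) (ht : t ∈ Icc (0:ℝ) (1 / 2)) :
    (∫ s in (0:ℝ)..t, (1 - 2 * s) ^ r) * g 0 ^ r ≤ ∫ s in (0:ℝ)..t, g s ^ r := by
  have hnonneg := hanti.nonneg_of_nonneg_right hg₀
  have hg0 : 0 ≤ g 0 := hnonneg 0 (left_mem_Icc.2 (by norm_num))
  rw [← intervalIntegral.integral_mul_const]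
  refine integral_mono_on ht.1 (Continuous.intervalIntegrable (by fun_prop) _ _)
    (AntitoneOn.intervalIntegrable ((hanti.rpow_const hnonneg hr).mono ?_)) fun s hs => ?_
  · rw [uIcc_of_le ht.1]; exact Icc_subset_Icc le_rfl ht.2
  · have hs' : s ∈ Icc (0:ℝ) (1 / 2) := ⟨hs.1, hs.2.trans ht.2⟩
    have hs₂ : 0 ≤ 1 - 2 * s := by linarith [hs'.2]
    have hchord := hg.one_sub_div_mul_le (by norm_num) hg₀ hs'
    rw [show 1 - s / (1 / 2) = 1 - 2 * s by ring] at hchord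
    rw [← Real.mul_rpow hs₂ hg0]
    exact Real.rpow_le_rpow (mul_nonneg hs₂ hg0) hchord hr

theorem AntitoneOn.two_mul_intervalIntegral_rpow_rpow_le {g : ℝ → ℝ} {p : ℝ}
    (hanti : AntitoneOn g (Icc 0 (1 / 2))) (hg₀ : 0 ≤ g (1 / 2)) (hp : 1 < p) :
    (2 * ∫ s in (0:ℝ)..1/2, g s ^ (p / (p - 1))) ^ (1 / p) ≤ g 0 ^ (1 / (p - 1)) := by
  have hp₁ : 0 < p - 1 := sub_pos.2 hp
  have hI : (0:ℝ) ≤ 1 / 2 := by norm_num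
  have hnonneg := hanti.nonneg_of_nonneg_right hg₀
  have hmean :=
    (hanti.rpow_const hnonneg (r := p / (p - 1)) (by positivity)).intervalIntegral_le_mul hI
  have hexp : p / (p - 1) * (1 / p) = 1 / (p - 1) := by field_simp
  calc (2 * ∫ s in (0:ℝ)..1/2, g s ^ (p / (p - 1))) ^ (1 / p)
      ≤ (g 0 ^ (p / (p - 1))) ^ (1 / p) := by
        gcongr
        · exact mul_nonneg zero_le_two
            (integral_nonneg hI fun s hs => Real.rpow_nonneg (hnonneg s hs) _)
        · linarith
    _ = g 0 ^ (1 / (p - 1)) := by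
        rw [← Real.rpow_mul (hnonneg 0 (left_mem_Icc.2 hI)), hexp]

theorem concavity_and_harnack_general
    (p : ℝ) (hp : 1 < p) (h : ℝ → ℝ)
    (hnonneg : ∀ s ∈ Set.Icc (0:ℝ) (1/2), 0 ≤ h s)
    (hmono : MonotoneOn h (Set.Icc (0:ℝ) (1/2)))
    (μ u φ : ℝ → ℝ)
    (hμ : ∀ t, μ t = ∫ s in t..(1/2:ℝ), h s)
    (hu : ∀ t, u t = ∫ s in (0:ℝ)..t, μ s ^ (1/(p-1)))
    (hφ : ∀ t, φ t = ∫ s in (0:ℝ)..t, (1-2*s) ^ (1/(p-1))) :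
    ConcaveOn ℝ (Set.Icc 0 (1/2)) u ∧
    ∀ t ∈ Set.Icc (0:ℝ) (1/2),
      φ t * (2 * ∫ s in (0:ℝ)..(1/2), μ s ^ (p/(p-1))) ^ (1/p) ≤ u t := by
  have hq : 0 ≤ 1 / (p - 1) := by have := sub_pos.2 hp; positivity
  have hμ_eq : μ = fun t => ∫ s in t..(1/2:ℝ), h s := funext hμ
  have hμ_concave : ConcaveOn ℝ (Icc 0 (1 / 2)) μ :=
    hμ_eq ▸ hmono.concaveOn_intervalIntegral_right
  have hμ_anti : AntitoneOn μ (Icc 0 (1 / 2)) := hμ_eq ▸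
    antitoneOn_intervalIntegral_right_of_nonneg (hmono.integrableOn_isCompact isCompact_Icc) hnonneg
  have hμ_half : 0 ≤ μ (1 / 2) := by simp [hμ]
  rw [show u = _ from funext hu]
  refine ⟨AntitoneOn.concaveOn_intervalIntegral
    (hμ_anti.rpow_const (hμ_anti.nonneg_of_nonneg_right hμ_half) hq), fun t ht => ?_⟩
  rw [hφ]
  calc _ ≤ (∫ s in (0:ℝ)..t, (1 - 2 * s) ^ (1 / (p - 1))) * μ 0 ^ (1 / (p - 1)) :=
        mul_le_mul_of_nonneg_left (hμ_anti.two_mul_intervalIntegral_rpow_rpow_le hμ_half hp)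
          (integral_nonneg ht.1 fun s hs => Real.rpow_nonneg (by linarith [hs.2, ht.2]) _)
    _ ≤ _ := hμ_concave.intervalIntegral_one_sub_two_mul_rpow_mul_le hμ_anti hμ_half hq ht

/-- Harnack-type inequality (Lemma 3.3 abstracted): with `μ(t) = ∫_t^{1/2} h`,
`u(t) = ∫_0^t μ(s)^{1/(p−1)} ds` and `φ(t) = ∫_0^t (1−2s)^{1/(p−1)} ds`,
the function `u` is concave on `[0,1/2]` and
`u(t) ≥ φ(t) · (2 ∫_0^{1/2} μ(s)^{p/(p−1)} ds)^{1/p}` for `t ∈ [0,1/2]`. -/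
theorem concavity_and_harnack
    (p : ℝ) (hp : 1 < p) (h : ℝ → ℝ)
    (hint : IntegrableOn h (Set.Icc 0 (1/2)))
    (hnonneg : ∀ s ∈ Set.Icc (0:ℝ) (1/2), 0 ≤ h s)
    (hmono : MonotoneOn h (Set.Icc (0:ℝ) (1/2)))
    (μ u φ : ℝ → ℝ)
    (hμ : ∀ t, μ t = ∫ s in t..(1/2:ℝ), h s)
    (hu : ∀ t, u t = ∫ s in (0:ℝ)..t, μ s ^ (1/(p-1)))
    (hφ : ∀ t, φ t = ∫ s in (0:ℝ)..t, (1-2*s) ^ (1/(p-1))) :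
    ConcaveOn ℝ (Set.Icc 0 (1/2)) u ∧
    ∀ t ∈ Set.Icc (0:ℝ) (1/2),
      φ t * (2 * ∫ s in (0:ℝ)..(1/2), μ s ^ (p/(p-1))) ^ (1/p) ≤ u t :=
  concavity_and_harnack_general p hp h hnonneg hmono μ u φ hμ hu hφ
end

section
/- For every continuous u : [0,1] → ℝ with u ≥ 0, the function T(u) belongs to K, i.e. T(u) ≥ 0 on [0,1] and min_{t ∈ [1/4, 3/4]} T(u)(t) ≥ (1/4) ‖T(u)‖∞. In particular T maps K into K. -/
open Set MeasureTheory

/-- The Green-type kernel `k(t,s)`. -/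
noncomputable def kker (t s : ℝ) : ℝ := if t ≤ s then t * (1 - s) else s * (1 - t)

/-- The nonlinearity `f(x) = a₂x² + a₁x + a₀` with
`a₂ = 10⁻²`, `a₁ = 2.5×10⁻³`, `a₀ = 1`. -/
noncomputable def fpoly (x : ℝ) : ℝ := (1/100) * x^2 + (25/10000) * x + 1

/-- The Hammerstein integral operator `T(u)(t) = ∫₀¹ k(t,s) f(u(s)) ds`. -/
noncomputable def Tint (u : ℝ → ℝ) (t : ℝ) : ℝ := ∫ s in (0:ℝ)..1, kker t s * fpoly (u s)

/-- The supremum norm of `u` on `[0,1]`. -/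
noncomputable def supNorm (u : ℝ → ℝ) : ℝ := sSup ((fun t => |u t|) '' Set.Icc (0:ℝ) 1)

/-- Membership in the cone
`K = {u ∈ C[0,1] : u ≥ 0 and min_{[1/4,3/4]} u ≥ (1/4)‖u‖∞}`. -/
def memK (u : ℝ → ℝ) : Prop :=
  (∀ t ∈ Set.Icc (0:ℝ) 1, 0 ≤ u t) ∧
  ∀ t ∈ Set.Icc (1/4:ℝ) (3/4), (1/4) * supNorm u ≤ u t

/-! The Green kernel satisfies `min t (1 - t) · Φ(s) ≤ k(t,s) ≤ Φ(s)` on `[0,1]²`. Hence for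
any nonnegative continuous `g`, the function `t ↦ ∫ k(t,s) g(s) ds` lies between
`min t (1 - t) · C` and `C`, where `C = ∫ Φ g`, and `min t (1 - t) ≥ 1/4` on `[1/4, 3/4]`.
Since `f > 0` on all of `ℝ`, this applies to `g = f ∘ u`. -/

lemma kker_eq_min_mul_one_sub_max (t s : ℝ) : kker t s = min t s * (1 - max t s) := by
  unfold kker
  split_ifs with h
  · rw [min_eq_left h, max_eq_right h]
  · rw [min_eq_right (not_le.mp h).le, max_eq_left (not_le.mp h).le]

lemma continuous_kker (t : ℝ) : Continuous (kker t) := by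
  rw [show kker t = fun s => min t s * (1 - max t s) from
    funext (kker_eq_min_mul_one_sub_max t)]
  fun_prop

lemma kker_nonneg {t s : ℝ} (ht : t ∈ Icc (0:ℝ) 1) (hs : s ∈ Icc (0:ℝ) 1) :
    0 ≤ kker t s := by
  rw [kker_eq_min_mul_one_sub_max]
  exact mul_nonneg (le_min ht.1 hs.1) (sub_nonneg.mpr (max_le ht.2 hs.2))

lemma kker_le {t s : ℝ} (ht : t ∈ Icc (0:ℝ) 1) (hs : s ∈ Icc (0:ℝ) 1) :
    kker t s ≤ s * (1 - s) := by
  rw [kker_eq_min_mul_one_sub_max]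
  exact mul_le_mul (min_le_right t s) (by linarith [le_max_right t s])
    (sub_nonneg.mpr (max_le ht.2 hs.2)) hs.1

lemma min_mul_le_kker {t s : ℝ} (ht : t ∈ Icc (0:ℝ) 1) (hs : s ∈ Icc (0:ℝ) 1) :
    min t (1 - t) * (s * (1 - s)) ≤ kker t s := by
  have hs' : 0 ≤ 1 - s := by linarith [hs.2]
  have hΦ : 0 ≤ s * (1 - s) := mul_nonneg hs.1 hs'
  unfold kker
  split_ifs with h
  · calc min t (1 - t) * (s * (1 - s)) ≤ t * (s * (1 - s)) := by gcongr; exact min_le_left _ _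
      _ ≤ t * (1 - s) := mul_le_mul_of_nonneg_left (by nlinarith [hs.2]) ht.1
  · calc min t (1 - t) * (s * (1 - s)) ≤ (1 - t) * (s * (1 - s)) := by
          gcongr; exact min_le_right _ _
      _ ≤ s * (1 - t) := by
          nlinarith [mul_nonneg (mul_nonneg (sub_nonneg.mpr ht.2) hs.1) hs.1]

lemma fpoly_pos (x : ℝ) : 0 < fpoly x := by
  unfold fpoly
  nlinarith [sq_nonneg (x + 1/8)]

lemma continuous_fpoly : Continuous fpoly := by
  unfold fpoly
  fun_prop

lemma supNorm_le {u : ℝ → ℝ} {C : ℝ} (h : ∀ t ∈ Icc (0:ℝ) 1, |u t| ≤ C) :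
    supNorm u ≤ C :=
  csSup_le ((nonempty_Icc.mpr zero_le_one).image _) (forall_mem_image.mpr h)

lemma memK_of_le_of_le {u : ℝ → ℝ} {C : ℝ} (hnonneg : ∀ t ∈ Icc (0:ℝ) 1, 0 ≤ u t)
    (hle : ∀ t ∈ Icc (0:ℝ) 1, u t ≤ C)
    (hge : ∀ t ∈ Icc (1/4:ℝ) (3/4), (1/4) * C ≤ u t) :
    memK u := by
  refine ⟨hnonneg, fun t ht => le_trans ?_ (hge t ht)⟩
  gcongr
  exact supNorm_le fun s hs => (abs_of_nonneg (hnonneg s hs)).trans_le (hle s hs)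

section GreenIntegral

variable {g : ℝ → ℝ}

lemma intervalIntegrable_mul_of_continuousOn {h : ℝ → ℝ} (hh : Continuous h)
    (hg : ContinuousOn g (Icc 0 1)) : IntervalIntegrable (fun s => h s * g s) volume 0 1 := by
  apply ContinuousOn.intervalIntegrable
  rw [uIcc_of_le zero_le_one]
  exact hh.continuousOn.mul hg

lemma integral_kker_mul_nonneg (hg0 : ∀ s ∈ Icc (0:ℝ) 1, 0 ≤ g s) {t : ℝ}
    (ht : t ∈ Icc (0:ℝ) 1) :
    0 ≤ ∫ s in (0:ℝ)..1, kker t s * g s :=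
  intervalIntegral.integral_nonneg zero_le_one fun s hs =>
    mul_nonneg (kker_nonneg ht hs) (hg0 s hs)

lemma integral_kker_mul_le (hg : ContinuousOn g (Icc 0 1))
    (hg0 : ∀ s ∈ Icc (0:ℝ) 1, 0 ≤ g s) {t : ℝ} (ht : t ∈ Icc (0:ℝ) 1) :
    ∫ s in (0:ℝ)..1, kker t s * g s ≤ ∫ s in (0:ℝ)..1, s * (1 - s) * g s :=
  intervalIntegral.integral_mono_on zero_le_one
    (intervalIntegrable_mul_of_continuousOn (continuous_kker t) hg)
    (intervalIntegrable_mul_of_continuousOn (by fun_prop) hg)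
    fun s hs => mul_le_mul_of_nonneg_right (kker_le ht hs) (hg0 s hs)

lemma min_mul_integral_le_integral_kker_mul (hg : ContinuousOn g (Icc 0 1))
    (hg0 : ∀ s ∈ Icc (0:ℝ) 1, 0 ≤ g s) {t : ℝ} (ht : t ∈ Icc (0:ℝ) 1) :
    min t (1 - t) * ∫ s in (0:ℝ)..1, s * (1 - s) * g s ≤
      ∫ s in (0:ℝ)..1, kker t s * g s := by
  rw [← intervalIntegral.integral_const_mul]
  refine intervalIntegral.integral_mono_on zero_le_one
    ((intervalIntegrable_mul_of_continuousOn (by fun_prop) hg).const_mul _)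
    (intervalIntegrable_mul_of_continuousOn (continuous_kker t) hg) fun s hs => ?_
  rw [← mul_assoc]
  exact mul_le_mul_of_nonneg_right (min_mul_le_kker ht hs) (hg0 s hs)

lemma memK_integral_kker_mul (hg : ContinuousOn g (Icc 0 1))
    (hg0 : ∀ s ∈ Icc (0:ℝ) 1, 0 ≤ g s) :
    memK fun t => ∫ s in (0:ℝ)..1, kker t s * g s := by
  have hC : 0 ≤ ∫ s in (0:ℝ)..1, s * (1 - s) * g s :=
    intervalIntegral.integral_nonneg zero_le_one fun s hs =>
      mul_nonneg (mul_nonneg hs.1 (by linarith [hs.2])) (hg0 s hs)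
  refine memK_of_le_of_le (fun t ht => integral_kker_mul_nonneg hg0 ht)
    (fun t ht => integral_kker_mul_le hg hg0 ht) fun t ht => ?_
  have ht01 : t ∈ Icc (0:ℝ) 1 := ⟨by linarith [ht.1], by linarith [ht.2]⟩
  have hmin : 1/4 ≤ min t (1 - t) := le_min ht.1 (by linarith [ht.2])
  exact (mul_le_mul_of_nonneg_right hmin hC).trans
    (min_mul_integral_le_integral_kker_mul hg hg0 ht01)

end GreenIntegral

/-- For every continuous nonnegative `u` on `[0,1]`, `T(u) ∈ K`; in particular
`T` maps `K` into `K`. -/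
theorem T_maps_into_cone :
    (∀ u : ℝ → ℝ, ContinuousOn u (Set.Icc 0 1) →
      (∀ t ∈ Set.Icc (0:ℝ) 1, 0 ≤ u t) → memK (Tint u)) ∧
    (∀ u : ℝ → ℝ, ContinuousOn u (Set.Icc 0 1) → memK u → memK (Tint u)) := by
  have hT : ∀ u : ℝ → ℝ, ContinuousOn u (Icc 0 1) → memK (Tint u) := fun u hu =>
    memK_integral_kker_mul (continuous_fpoly.comp_continuousOn hu) fun s _ => (fpoly_pos _).le
  exact ⟨fun u hu _ => hT u hu, fun u hu _ => hT u hu⟩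
end
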